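/- arXiv:0905.0989 — 4 statements merged into one kernel-verified Lean document; each statement's English description precedes it below -/
import Mathlib

section
/- Let (E, 𝔈) be a measurable space, let P₀ and P_ν be probability measures on (E, 𝔈) with P_ν absolutely continuous with respect to P₀, and let L_ν = dP_ν/dP₀ be the Radon–Nikodym derivative, assumed square-integrable with respect to P₀. Then for every α ∈ (0,1) and every measurable set A ⊆ E with P₀(A) ≤ α, one has P_ν(E ∖ A) ≥ 1 − α − (1/2)·(∫_E L_ν² dP₀ − 1)^{1/2}. -/
/-!
Write `L = dP_ν/dP₀`. Since `∫ (L - 1) dP₀ = 0`, the positive and negative parts of `L - 1` have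
equal mass, so `P_ν(A) - P₀(A) = ∫_A (L - 1) dP₀ ≤ (1/2) ∫ |L - 1| dP₀`. By Cauchy–Schwarz,
`∫ |L - 1| dP₀ ≤ (∫ (L - 1)² dP₀)^{1/2} = (∫ L² dP₀ - 1)^{1/2}`.
-/

open MeasureTheory ProbabilityTheory

section

variable {Ω : Type*} [MeasurableSpace Ω] {μ : Measure Ω}

lemma setIntegral_le_half_integral_abs_of_integral_eq_zero {f : Ω → ℝ} {s : Set Ω}
    (hs : MeasurableSet s) (hf : Integrable f μ) (hf0 : ∫ x, f x ∂μ = 0) :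
    ∫ x in s, f x ∂μ ≤ (1 / 2) * ∫ x, |f x| ∂μ := by
  have h_on_s : ∫ x in s, f x ∂μ ≤ ∫ x in s, |f x| ∂μ :=
    integral_mono hf.restrict hf.abs.restrict fun x => le_abs_self (f x)
  have h_on_compl : -∫ x in sᶜ, f x ∂μ ≤ ∫ x in sᶜ, |f x| ∂μ := by
    rw [← integral_neg]
    exact integral_mono hf.neg.restrict hf.abs.restrict fun x => neg_le_abs (f x)
  have h_split := integral_add_compl hs hf
  have h_split_abs := integral_add_compl hs hf.abs
  linarith

lemma integral_abs_le_sqrt_integral_sq [IsProbabilityMeasure μ] {f : Ω → ℝ} (hf : MemLp f 2 μ) :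
    ∫ x, |f x| ∂μ ≤ √(∫ x, f x ^ 2 ∂μ) := by
  refine Real.le_sqrt_of_sq_le ?_
  have h := variance_nonneg |f| μ
  rw [variance_eq_sub hf.abs] at h
  simpa [sq_abs] using h

lemma integral_sub_one_sq_of_integral_eq_one [IsProbabilityMeasure μ] {f : Ω → ℝ}
    (hf : MemLp f 2 μ) (hf1 : ∫ x, f x ∂μ = 1) :
    ∫ x, (f x - 1) ^ 2 ∂μ = ∫ x, f x ^ 2 ∂μ - 1 := by
  have h := variance_eq_sub hf
  rw [variance_eq_integral hf.aemeasurable, hf1] at h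
  simpa using h

lemma measureReal_le_add_half_sqrt_integral_rnDeriv_sq {P Q : Measure Ω} [IsProbabilityMeasure P]
    [IsProbabilityMeasure Q] (hPQ : P ≪ Q) (hL : MemLp (fun x => (P.rnDeriv Q x).toReal) 2 Q)
    {s : Set Ω} (hs : MeasurableSet s) :
    P.real s ≤ Q.real s + (1 / 2) * √(∫ x, (P.rnDeriv Q x).toReal ^ 2 ∂Q - 1) := by
  set L : Ω → ℝ := fun x => (P.rnDeriv Q x).toReal
  have hL_int : Integrable L Q := hL.integrable one_le_two
  have hL_one : ∫ x, L x ∂Q = 1 := by simp [L, Measure.integral_toReal_rnDeriv hPQ]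
  have hf_int : Integrable (fun x => L x - 1) Q := hL_int.sub (integrable_const 1)
  have hf_zero : ∫ x, (L x - 1) ∂Q = 0 := by simp [integral_sub hL_int, hL_one]
  have h_diff : P.real s - Q.real s = ∫ x in s, (L x - 1) ∂Q := by
    rw [integral_sub hL_int.restrict (integrable_const 1), Measure.setIntegral_toReal_rnDeriv hPQ]
    simp
  have h_cs := integral_abs_le_sqrt_integral_sq (f := fun x => L x - 1) (hL.sub (memLp_const 1))
  rw [integral_sub_one_sq_of_integral_eq_one hL hL_one] at h_cs
  have h_half := setIntegral_le_half_integral_abs_of_integral_eq_zero hs hf_int hf_zero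
  linarith

end

/-- The mixture lower-bound lemma (Lemma 2 of Fromont–Laurent–Reynaud-Bouret): if `P_ν ≪ P₀`
with square-integrable likelihood ratio `L_ν = dP_ν/dP₀`, then for any measurable set `A` with
`P₀(A) ≤ α`, `P_ν(Aᶜ) ≥ 1 - α - (1/2)(∫ L_ν² dP₀ - 1)^{1/2}`. -/
theorem mixture_second_kind_lower_bound {E : Type*} [MeasurableSpace E]
    (P₀ Pν : Measure E) [IsProbabilityMeasure P₀] [IsProbabilityMeasure Pν]
    (hac : Pν ≪ P₀)
    (hL2 : MemLp (fun x => (Pν.rnDeriv P₀ x).toReal) 2 P₀)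
    (α : ℝ) (hα : α ∈ Set.Ioo (0 : ℝ) 1)
    (A : Set E) (hA : MeasurableSet A) (hPA : P₀ A ≤ ENNReal.ofReal α) :
    (Pν Aᶜ).toReal ≥
      1 - α - (1 / 2) * Real.sqrt ((∫ x, ((Pν.rnDeriv P₀ x).toReal) ^ 2 ∂P₀) - 1) := by
  have hP₀A : P₀.real A ≤ α := ENNReal.toReal_le_of_le_ofReal hα.1.le hPA
  have hPνA := measureReal_le_add_half_sqrt_integral_rnDeriv_sq hac hL2 hA
  have hcompl : Pν.real Aᶜ = 1 - Pν.real A := probReal_compl_eq_one_sub hA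
  rw [← measureReal_def, hcompl]
  linarith
end

section
/- Let M, D be positive integers with D ≤ M, let ρ > 0, L > 0, and r > 0 with r² ≤ D/M. Let φ : [0,1] → ℝ be measurable with ∫₀¹ φ(x)dx = 0, ∫₀¹ φ(x)²dx = 1, and |φ(x)| ≤ ρ for all x. Set c = (r/ρ)·√(M/D). Let Y be a Poisson random variable with parameter ρL/M and let (Z_l)_{l≥1} be i.i.d. uniform on [0,1], independent of Y. Define A = (1/2)·( ∏_{l=1}^{Y} (1 + c·φ(Z_l)) + ∏_{l=1}^{Y} (1 − c·φ(Z_l)) ), with empty products equal to 1. Then E[A] = 1 and E[A²] = cosh( r²L/(ρD) ). -/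
/-!
Conditioning on `Y = n` and using the independence of the `Z l`, the Poisson count turns
`E ∏_{l<Y} g(Z_l)` into `∑ₙ e^{-θ} θⁿ/n! (∫ g)ⁿ = exp (θ (∫ g - 1))` for every integrable `g`.
Both `A` and `A²` are combinations of such products with `g = (1 + aφ)(1 + bφ)`, and
`∫ (1 + aφ)(1 + bφ) = 1 + ab` because `φ` has mean `0` and unit second moment. Hence
`E A = 1` and `E A² = (e^{θc²} + e^{-θc²}) / 2`, where `θc² = r²L/(ρD)`.
-/

open MeasureTheory ProbabilityTheory Finset Real

namespace ProbabilityTheory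

variable {Ω β : Type*} [MeasurableSpace Ω] [MeasurableSpace β] {P : Measure Ω}
  {μ : Measure β} {Z : ℕ → Ω → β} {h : β → ℝ}

lemma iIndepFun.indepFun_prod_range_comp (hZiid : iIndepFun Z P) (hZ : ∀ l, Measurable (Z l))
    (hm : Measurable h) (n : ℕ) :
    IndepFun (fun ω => ∏ l ∈ range n, h (Z l ω)) (fun ω => h (Z n ω)) P := by
  have := (hZiid.comp (fun _ => h) fun _ => hm).indepFun_prod_range_succ
    (fun l => hm.comp (hZ l)) n
  rw [prod_fn] at this
  exact this

variable [IsProbabilityMeasure P]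

lemma iIndepFun.integrable_prod_range_comp (hZiid : iIndepFun Z P) (hZ : ∀ l, Measurable (Z l))
    (hZlaw : ∀ l, P.map (Z l) = μ) (hm : Measurable h) (hi : Integrable h μ) (n : ℕ) :
    Integrable (fun ω => ∏ l ∈ range n, h (Z l ω)) P := by
  induction n with
  | zero => simp
  | succ n ih =>
    simp only [prod_range_succ]
    exact (hZiid.indepFun_prod_range_comp hZ hm n).integrable_mul ih
      (((hZlaw n).symm ▸ hi).comp_measurable (hZ n))

lemma iIndepFun.integral_prod_range_comp (hZiid : iIndepFun Z P) (hZ : ∀ l, Measurable (Z l))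
    (hZlaw : ∀ l, P.map (Z l) = μ) (hm : Measurable h) (hi : Integrable h μ) (n : ℕ) :
    ∫ ω, ∏ l ∈ range n, h (Z l ω) ∂P = (∫ x, h x ∂μ) ^ n := by
  induction n with
  | zero => simp
  | succ n ih =>
    simp only [prod_range_succ]
    rw [(hZiid.indepFun_prod_range_comp hZ hm n).integral_fun_mul_eq_mul_integral
      (hZiid.integrable_prod_range_comp hZ hZlaw hm hi n).aestronglyMeasurable
      (hm.comp (hZ n)).aestronglyMeasurable, ih, ← hZlaw n,
      integral_map (hZ n).aemeasurable hm.aestronglyMeasurable, pow_succ]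

end ProbabilityTheory

section RandomProduct

lemma Set.iUnion_preimage_singleton {Ω α : Type*} (Y : Ω → α) : ⋃ a, Y ⁻¹' {a} = Set.univ := by
  rw [← Set.preimage_iUnion, Set.iUnion_of_singleton, Set.preimage_univ]

variable {Ω β : Type*} [MeasurableSpace Ω] [MeasurableSpace β] {P : Measure Ω}
  [IsProbabilityMeasure P] {μ : Measure β} {Y : Ω → ℕ} {Z : ℕ → Ω → β} {h : β → ℝ}

lemma setIntegral_prod_range_preimage_singleton (hY : Measurable Y)
    (hZ : ∀ l, Measurable (Z l)) (hZlaw : ∀ l, P.map (Z l) = μ) (hZiid : iIndepFun Z P)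
    (hindep : IndepFun Y (fun ω l => Z l ω) P) (hm : Measurable h) (hi : Integrable h μ) (n : ℕ) :
    ∫ ω in Y ⁻¹' {n}, ∏ l ∈ range (Y ω), h (Z l ω) ∂P
      = P.real (Y ⁻¹' {n}) * (∫ x, h x ∂μ) ^ n := by
  calc ∫ ω in Y ⁻¹' {n}, ∏ l ∈ range (Y ω), h (Z l ω) ∂P
      = ∫ ω in Y ⁻¹' {n}, ∏ l ∈ range n, h (Z l ω) ∂P :=
        setIntegral_congr_fun (hY (measurableSet_singleton n)) fun ω hω => by rw [hω]
    _ = P.real (Y ⁻¹' {n}) * ∫ ω, ∏ l ∈ range n, h (Z l ω) ∂P :=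
        Indep.setIntegral_eq_mul (f := fun z : ℕ → β => ∏ l ∈ range n, h (z l)) hY.comap_le
          ((IndepFun_iff_Indep _ _ _).1 hindep) (measurable_pi_lambda _ hZ).aemeasurable
          ⟨{n}, measurableSet_singleton n, rfl⟩
          (measurable_prod _ fun l _ => hm.comp (measurable_pi_apply l)).aestronglyMeasurable
    _ = P.real (Y ⁻¹' {n}) * (∫ x, h x ∂μ) ^ n := by
        rw [hZiid.integral_prod_range_comp hZ hZlaw hm hi]

lemma integrable_prod_range_of_indepFun (hY : Measurable Y)
    (hZ : ∀ l, Measurable (Z l)) (hZlaw : ∀ l, P.map (Z l) = μ) (hZiid : iIndepFun Z P)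
    (hindep : IndepFun Y (fun ω l => Z l ω) P) (hm : Measurable h) (hi : Integrable h μ)
    (hsum : Summable fun n => P.real (Y ⁻¹' {n}) * (∫ x, ‖h x‖ ∂μ) ^ n) :
    Integrable (fun ω => ∏ l ∈ range (Y ω), h (Z l ω)) P := by
  have hslice (n : ℕ) : IntegrableOn (fun ω => ∏ l ∈ range (Y ω), h (Z l ω)) (Y ⁻¹' {n}) P :=
    (hZiid.integrable_prod_range_comp hZ hZlaw hm hi n).integrableOn.congr_fun
      (fun ω hω => by rw [hω]) (hY (measurableSet_singleton n))
  have hnorm (n : ℕ) : ∫ ω in Y ⁻¹' {n}, ‖∏ l ∈ range (Y ω), h (Z l ω)‖ ∂P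
      = P.real (Y ⁻¹' {n}) * (∫ x, ‖h x‖ ∂μ) ^ n := by
    simp only [norm_prod]
    exact setIntegral_prod_range_preimage_singleton hY hZ hZlaw hZiid hindep hm.norm hi.norm n
  have := integrableOn_iUnion_of_summable_integral_norm hslice (by simpa only [hnorm] using hsum)
  rwa [Set.iUnion_preimage_singleton, integrableOn_univ] at this

lemma integral_prod_range_of_indepFun (hY : Measurable Y)
    (hZ : ∀ l, Measurable (Z l)) (hZlaw : ∀ l, P.map (Z l) = μ) (hZiid : iIndepFun Z P)
    (hindep : IndepFun Y (fun ω l => Z l ω) P) (hm : Measurable h) (hi : Integrable h μ)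
    (hsum : Summable fun n => P.real (Y ⁻¹' {n}) * (∫ x, ‖h x‖ ∂μ) ^ n) :
    ∫ ω, ∏ l ∈ range (Y ω), h (Z l ω) ∂P = ∑' n, P.real (Y ⁻¹' {n}) * (∫ x, h x ∂μ) ^ n := by
  have hint := integrable_prod_range_of_indepFun hY hZ hZlaw hZiid hindep hm hi hsum
  rw [← setIntegral_univ, ← Set.iUnion_preimage_singleton Y,
    integral_iUnion (fun n => hY (measurableSet_singleton n))
      (fun m n hmn => (Set.disjoint_singleton.2 hmn).preimage Y)
      (by rwa [Set.iUnion_preimage_singleton, integrableOn_univ])]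
  exact tsum_congr (setIntegral_prod_range_preimage_singleton hY hZ hZlaw hZiid hindep hm hi)

lemma hasSum_poisson_mul_pow (θ m : ℝ) :
    HasSum (fun n : ℕ => exp (-θ) * θ ^ n / n.factorial * m ^ n) (exp (θ * (m - 1))) := by
  have hterm : (fun n : ℕ => exp (-θ) * θ ^ n / n.factorial * m ^ n)
      = fun n => exp (-θ) * ((θ * m) ^ n / n.factorial) := by
    ext n
    rw [mul_pow]
    ring
  have := (NormedSpace.expSeries_div_hasSum_exp (θ * m)).mul_left (exp (-θ))
  rwa [← exp_eq_exp_ℝ, ← exp_add, show -θ + θ * m = θ * (m - 1) by ring, ← hterm] at this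

theorem integral_prod_range_of_poisson {θ : ℝ} (hθ : 0 ≤ θ) (hY : Measurable Y)
    (hYlaw : ∀ n : ℕ, P {ω | Y ω = n} = ENNReal.ofReal (exp (-θ) * θ ^ n / n.factorial))
    (hZ : ∀ l, Measurable (Z l)) (hZlaw : ∀ l, P.map (Z l) = μ) (hZiid : iIndepFun Z P)
    (hindep : IndepFun Y (fun ω l => Z l ω) P) (hm : Measurable h) (hi : Integrable h μ) :
    Integrable (fun ω => ∏ l ∈ range (Y ω), h (Z l ω)) P ∧
      ∫ ω, ∏ l ∈ range (Y ω), h (Z l ω) ∂P = exp (θ * (∫ x, h x ∂μ - 1)) := by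
  have hweight (n : ℕ) : P.real (Y ⁻¹' {n}) = exp (-θ) * θ ^ n / n.factorial := by
    change (P {ω | Y ω = n}).toReal = _
    rw [hYlaw n, ENNReal.toReal_ofReal (by positivity)]
  have hsum : Summable fun n => P.real (Y ⁻¹' {n}) * (∫ x, ‖h x‖ ∂μ) ^ n := by
    simpa only [hweight] using (hasSum_poisson_mul_pow θ (∫ x, ‖h x‖ ∂μ)).summable
  refine ⟨integrable_prod_range_of_indepFun hY hZ hZlaw hZiid hindep hm hi hsum, ?_⟩
  rw [integral_prod_range_of_indepFun hY hZ hZlaw hZiid hindep hm hi hsum]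
  simpa only [hweight] using (hasSum_poisson_mul_pow θ (∫ x, h x ∂μ)).tsum_eq

end RandomProduct

section Perturbation

variable {Ω β : Type*} [MeasurableSpace Ω] [MeasurableSpace β] {μ : Measure β}
  [IsProbabilityMeasure μ] {φ : β → ℝ}

lemma integral_one_add_mul_mul_one_add_mul (hφm : Measurable φ) (hφ1 : ∫ x, φ x ∂μ = 0)
    (hφ2 : ∫ x, φ x ^ 2 ∂μ = 1) (a b : ℝ) :
    Integrable (fun x => (1 + a * φ x) * (1 + b * φ x)) μ ∧
      ∫ x, (1 + a * φ x) * (1 + b * φ x) ∂μ = 1 + a * b := by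
  -- a non-integrable `φ ^ 2` would have Bochner integral `0`, so `hφ2` puts `φ` in `L²`
  have hφ2i : Integrable (fun x => φ x ^ 2) μ := Integrable.of_integral_ne_zero (by simp [hφ2])
  have hφi : Integrable φ μ :=
    ((memLp_two_iff_integrable_sq hφm.aestronglyMeasurable).2 hφ2i).integrable one_le_two
  have hrest : Integrable (fun x => (a + b) * φ x + a * b * φ x ^ 2) μ :=
    (hφi.const_mul _).fun_add (hφ2i.const_mul _)
  have hexpand : (fun x => (1 + a * φ x) * (1 + b * φ x))
      = fun x => 1 + ((a + b) * φ x + a * b * φ x ^ 2) := by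
    ext x
    ring
  rw [hexpand]
  refine ⟨(integrable_const 1).fun_add hrest, ?_⟩
  rw [integral_add (integrable_const 1) hrest, integral_add (hφi.const_mul _) (hφ2i.const_mul _),
    integral_const_mul, integral_const_mul, hφ1, hφ2]
  simp

theorem integral_symmetric_mixture_moments {P : Measure Ω} (hφm : Measurable φ)
    (hφ1 : ∫ x, φ x ∂μ = 0) (hφ2 : ∫ x, φ x ^ 2 ∂μ = 1) {θ : ℝ} {Y : Ω → ℕ} {Z : ℕ → Ω → β}
    (hcompound : ∀ g : β → ℝ, Measurable g → Integrable g μ →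
      Integrable (fun ω => ∏ l ∈ range (Y ω), g (Z l ω)) P ∧
        ∫ ω, ∏ l ∈ range (Y ω), g (Z l ω) ∂P = exp (θ * (∫ x, g x ∂μ - 1)))
    (c : ℝ) (A : Ω → ℝ)
    (hA : A = fun ω => 1 / 2 * (∏ l ∈ range (Y ω), (1 + c * φ (Z l ω))
      + ∏ l ∈ range (Y ω), (1 - c * φ (Z l ω)))) :
    ∫ ω, A ω ∂P = 1 ∧ ∫ ω, A ω ^ 2 ∂P = cosh (θ * c ^ 2) := by
  set R : ℝ → Ω → ℝ := fun a ω => ∏ l ∈ range (Y ω), (1 + a * φ (Z l ω)) with hR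
  have hcorr (a b : ℝ) : Integrable (fun ω => R a ω * R b ω) P ∧
      ∫ ω, R a ω * R b ω ∂P = exp (θ * (a * b)) := by
    obtain ⟨hint, heq⟩ := integral_one_add_mul_mul_one_add_mul hφm hφ1 hφ2 a b
    have := hcompound _ (by fun_prop) hint
    simpa only [hR, ← prod_mul_distrib, heq, add_sub_cancel_left] using this
  have hmean (a : ℝ) : Integrable (R a) P ∧ ∫ ω, R a ω ∂P = 1 := by
    simpa [hR] using hcorr a 0
  have hA' : A = fun ω => 1 / 2 * (R c ω + R (-c) ω) := by
    simp only [hA, hR, neg_mul, ← sub_eq_add_neg]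
  have hsq : (fun ω => A ω ^ 2) = fun ω =>
      1 / 4 * (R c ω * R c ω + 2 * (R c ω * R (-c) ω) + R (-c) ω * R (-c) ω) := by
    ext ω
    rw [hA']
    ring
  constructor
  · rw [hA', integral_const_mul, integral_add (hmean c).1 (hmean (-c)).1, (hmean c).2,
      (hmean (-c)).2]
    norm_num
  · rw [hsq, integral_const_mul,
      integral_add ((hcorr c c).1.fun_add ((hcorr c (-c)).1.const_mul 2)) (hcorr (-c) (-c)).1,
      integral_add (hcorr c c).1 ((hcorr c (-c)).1.const_mul 2), integral_const_mul,
      (hcorr c c).2, (hcorr c (-c)).2, (hcorr (-c) (-c)).2, cosh_eq]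
    ring_nf

end Perturbation

theorem likelihood_factor_moments_general {Ω : Type*} [MeasurableSpace Ω]
    (P : Measure Ω) [IsProbabilityMeasure P]
    (M D : ℕ) (hM : 0 < M)
    (ρ L r : ℝ) (hρ : 0 < ρ) (hL : 0 < L)
    (φ : ℝ → ℝ) (hφmeas : Measurable φ)
    (hφmean : ∫ x in Set.Icc (0 : ℝ) 1, φ x = 0)
    (hφnorm : ∫ x in Set.Icc (0 : ℝ) 1, (φ x) ^ 2 = 1)
    (Y : Ω → ℕ) (Z : ℕ → Ω → ℝ) (hY : Measurable Y) (hZ : ∀ l, Measurable (Z l))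
    (hYlaw : ∀ n : ℕ, P {ω | Y ω = n}
      = ENNReal.ofReal (Real.exp (-(ρ * L / M)) * (ρ * L / M) ^ n / n.factorial))
    (hZlaw : ∀ l, Measure.map (Z l) P = volume.restrict (Set.Icc (0 : ℝ) 1))
    (hZiid : ProbabilityTheory.iIndepFun (m := fun _ : ℕ => (inferInstance : MeasurableSpace ℝ)) Z P)
    (hindep : ProbabilityTheory.IndepFun Y (fun ω l => Z l ω) P)
    (c : ℝ) (hc : c = (r / ρ) * Real.sqrt ((M : ℝ) / D))
    (A : Ω → ℝ)
    (hA : A = fun ω => (1 / 2) * (∏ l ∈ Finset.range (Y ω), (1 + c * φ (Z l ω))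
      + ∏ l ∈ Finset.range (Y ω), (1 - c * φ (Z l ω)))) :
    (∫ ω, A ω ∂P) = 1 ∧ (∫ ω, (A ω) ^ 2 ∂P) = Real.cosh (r ^ 2 * L / (ρ * D)) := by
  have hθ : 0 ≤ ρ * L / M := by positivity
  have hθc : ρ * L / M * c ^ 2 = r ^ 2 * L / (ρ * D) := by
    have hM' : (M : ℝ) ≠ 0 := Nat.cast_ne_zero.2 hM.ne'
    rw [hc, mul_pow, sq_sqrt (by positivity), div_pow]
    field_simp
  have : IsProbabilityMeasure (volume.restrict (Set.Icc (0 : ℝ) 1)) := ⟨by simp⟩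
  rw [← hθc]
  exact integral_symmetric_mixture_moments hφmeas hφmean hφnorm
    (fun g hg hgi => integral_prod_range_of_poisson hθ hY hYlaw hZ hZlaw hZiid hindep hg hgi) c A hA

/-- Moments of the per-block likelihood-ratio factor `A_i` in the lower bound construction of
Fromont–Laurent–Reynaud-Bouret: if `Y` is Poisson with parameter `ρL/M`, `(Z_l)` are i.i.d.
uniform on `[0,1]` independent of `Y`, `φ` has mean `0`, unit `L²` norm and `|φ| ≤ ρ` on
`[0,1]`, `c = (r/ρ)√(M/D)` and
`A = (1/2)(∏_{l=1}^Y (1 + c φ(Z_l)) + ∏_{l=1}^Y (1 - c φ(Z_l)))`, then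
`E[A] = 1` and `E[A²] = cosh(r²L/(ρD))`. -/
theorem likelihood_factor_moments {Ω : Type*} [MeasurableSpace Ω]
    (P : Measure Ω) [IsProbabilityMeasure P]
    (M D : ℕ) (hM : 0 < M) (hD : 0 < D) (hDM : D ≤ M)
    (ρ L r : ℝ) (hρ : 0 < ρ) (hL : 0 < L) (hr : 0 < r)
    (hrDM : r ^ 2 ≤ (D : ℝ) / M)
    (φ : ℝ → ℝ) (hφmeas : Measurable φ)
    (hφmean : ∫ x in Set.Icc (0 : ℝ) 1, φ x = 0)
    (hφnorm : ∫ x in Set.Icc (0 : ℝ) 1, (φ x) ^ 2 = 1)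
    (hφbdd : ∀ x ∈ Set.Icc (0 : ℝ) 1, |φ x| ≤ ρ)
    (Y : Ω → ℕ) (Z : ℕ → Ω → ℝ) (hY : Measurable Y) (hZ : ∀ l, Measurable (Z l))
    (hYlaw : ∀ n : ℕ, P {ω | Y ω = n}
      = ENNReal.ofReal (Real.exp (-(ρ * L / M)) * (ρ * L / M) ^ n / n.factorial))
    (hZlaw : ∀ l, Measure.map (Z l) P = volume.restrict (Set.Icc (0 : ℝ) 1))
    (hZiid : ProbabilityTheory.iIndepFun (m := fun _ : ℕ => (inferInstance : MeasurableSpace ℝ)) Z P)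
    (hindep : ProbabilityTheory.IndepFun Y (fun ω l => Z l ω) P)
    (c : ℝ) (hc : c = (r / ρ) * Real.sqrt ((M : ℝ) / D))
    (A : Ω → ℝ)
    (hA : A = fun ω => (1 / 2) * (∏ l ∈ Finset.range (Y ω), (1 + c * φ (Z l ω))
      + ∏ l ∈ Finset.range (Y ω), (1 - c * φ (Z l ω)))) :
    (∫ ω, A ω ∂P) = 1 ∧ (∫ ω, (A ω) ^ 2 ∂P) = Real.cosh (r ^ 2 * L / (ρ * D)) :=
  likelihood_factor_moments_general P M D hM ρ L r hρ hL φ hφmeas hφmean hφnorm Y Z hY hZ hYlaw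
    hZlaw hZiid hindep c hc A hA
end

section
/- Let M and D be positive integers with D ≤ M, and let I and I' be independent random subsets of {1,…,M}, each uniformly distributed on the collection of D-element subsets of {1,…,M}. Then for every θ ≥ 0, E[ exp( θ·|I ∩ I'| ) ] ≤ ( 1 + (D/M)·(e^{θ} − 1) )^{D}. -/
/-!
Let `w = e^θ ≥ 1`. The pair `(I, I')` is uniform on pairs of `D`-sets, so it suffices to bound the
average of `w^{|A ∩ S|}` over uniform `D`-sets `S`, for a fixed `D`-set `A`. Expanding
`w^{|A ∩ S|} = ∑_{B ⊆ A ∩ S} (w - 1)^{|B|}`, this average is `∑_{B ⊆ A} (w - 1)^{|B|} P(B ⊆ S)`.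
A uniform `D`-set contains a fixed `b`-set with probability `C(D, b) / C(M, b) ≤ (D / M)^b`, and the
coefficients `(w - 1)^{|B|}` are nonnegative, so the average is at most
`∑_{B ⊆ A} ((D / M)(w - 1))^{|B|} = (1 + (D / M)(w - 1))^D`.
-/

open Finset MeasureTheory
open scoped BigOperators

namespace Nat

theorem descFactorial_mul_pow_le_descFactorial_mul_pow {m n : ℕ} (h : m ≤ n) (k : ℕ) :
    m.descFactorial k * n ^ k ≤ n.descFactorial k * m ^ k := by
  induction k with
  | zero => simp
  | succ k ih =>
    have hstep : (m - k) * n ≤ (n - k) * m := by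
      rw [Nat.sub_mul, Nat.sub_mul, Nat.mul_comm m n]
      exact Nat.sub_le_sub_left (Nat.mul_le_mul_left k h) _
    calc m.descFactorial (k + 1) * n ^ (k + 1)
        = (m - k) * n * (m.descFactorial k * n ^ k) := by rw [descFactorial_succ, pow_succ]; ring
      _ ≤ (n - k) * m * (n.descFactorial k * m ^ k) := Nat.mul_le_mul hstep ih
      _ = n.descFactorial (k + 1) * m ^ (k + 1) := by rw [descFactorial_succ, pow_succ]; ring

theorem choose_mul_pow_le_choose_mul_pow {m n : ℕ} (h : m ≤ n) (k : ℕ) :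
    m.choose k * n ^ k ≤ n.choose k * m ^ k := by
  have h' := descFactorial_mul_pow_le_descFactorial_mul_pow h k
  rw [descFactorial_eq_factorial_mul_choose, descFactorial_eq_factorial_mul_choose,
    Nat.mul_assoc, Nat.mul_assoc] at h'
  exact Nat.le_of_mul_le_mul_left h' k.factorial_pos

theorem choose_sub_mul_pow_le {n D b : ℕ} (hb : b ≤ D) (hD : D ≤ n) :
    (n - b).choose (D - b) * n ^ b ≤ n.choose D * D ^ b := by
  have hpos : 0 < n.choose b := choose_pos (hb.trans hD)
  refine Nat.le_of_mul_le_mul_left ?_ hpos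
  calc n.choose b * ((n - b).choose (D - b) * n ^ b)
      = n.choose D * (D.choose b * n ^ b) := by rw [← Nat.mul_assoc, ← choose_mul hb]; ring
    _ ≤ n.choose D * (n.choose b * D ^ b) :=
        Nat.mul_le_mul_left _ (choose_mul_pow_le_choose_mul_pow hD b)
    _ = n.choose b * (n.choose D * D ^ b) := by ring

end Nat

section Combinatorics

variable {α : Type*} [DecidableEq α]

theorem pow_card_inter_eq_sum_sub_one_pow (w : ℝ) (A S : Finset α) :
    w ^ #(A ∩ S) = ∑ B ∈ A.powerset with B ⊆ S, (w - 1) ^ #B := by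
  have hbinom := sum_pow_mul_eq_add_pow (w - 1) 1 (A ∩ S)
  simp only [one_pow, mul_one, sub_add_cancel] at hbinom
  rw [← hbinom]
  congr 1
  ext B
  simp only [mem_filter, mem_powerset, subset_inter_iff]

variable [Fintype α]

theorem card_filter_powersetCard_univ_subset_le {D : ℕ} (hD : D ≤ Fintype.card α)
    (B : Finset α) :
    (#{S ∈ powersetCard D univ | B ⊆ S} : ℝ) ≤
      (Fintype.card α).choose D * (D / Fintype.card α) ^ #B := by
  rcases le_or_gt #B D with hB | hB
  · rw [card_filter_powersetCard_subset B univ D (subset_univ B) hB, card_univ]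
    rcases Nat.eq_zero_or_pos (Fintype.card α) with hn | hn
    · have : #B = 0 := by omega
      simp [hn, this]
    rw [div_pow, mul_div_assoc', le_div_iff₀ (by positivity)]
    exact_mod_cast Nat.choose_sub_mul_pow_le hB hD
  · rw [filter_false_of_mem fun S hS hBS => (card_le_card hBS).not_gt (by simp_all)]
    simp only [card_empty, Nat.cast_zero]
    positivity

theorem expect_pow_card_inter_le {D : ℕ} (hD : D ≤ Fintype.card α) {w : ℝ} (hw : 1 ≤ w)
    (A : Finset α) :
    𝔼 S ∈ powersetCard D univ, w ^ #(A ∩ S) ≤ (1 + D / Fintype.card α * (w - 1)) ^ #A := by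
  set n := Fintype.card α
  have hC : (0 : ℝ) < #(powersetCard D (univ : Finset α)) := by
    rw [card_powersetCard, card_univ]; exact_mod_cast Nat.choose_pos hD
  rw [expect_eq_sum_div_card, div_le_iff₀ hC]
  calc ∑ S ∈ powersetCard D univ, w ^ #(A ∩ S)
      = ∑ B ∈ A.powerset, (w - 1) ^ #B * #{S ∈ powersetCard D univ | B ⊆ S} := by
        simp_rw [pow_card_inter_eq_sum_sub_one_pow, sum_filter]
        rw [sum_comm]
        refine sum_congr rfl fun B _ => ?_
        rw [← sum_filter, sum_const, nsmul_eq_mul, mul_comm]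
    _ ≤ ∑ B ∈ A.powerset, (w - 1) ^ #B * (n.choose D * (D / n) ^ #B) := by
        gcongr with B
        exact card_filter_powersetCard_univ_subset_le hD B
    _ = (1 + D / n * (w - 1)) ^ #A * #(powersetCard D (univ : Finset α)) := by
        rw [card_powersetCard, card_univ, add_comm, ← sum_pow_mul_eq_add_pow, sum_mul]
        refine sum_congr rfl fun B _ => ?_
        rw [one_pow, mul_one, mul_pow]
        ring

end Combinatorics

section Probability

variable {Ω α : Type*} [MeasurableSpace Ω] {P : Measure Ω} [Fintype α] {X : Ω → α}

theorem integral_comp_eq_sum_measureReal [IsFiniteMeasure P]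
    (hX : ∀ a, MeasurableSet {ω | X ω = a}) (f : α → ℝ) :
    ∫ ω, f (X ω) ∂P = ∑ a, P.real {ω | X ω = a} * f a := by
  have hdecomp : (fun ω => f (X ω)) = fun ω => ∑ a, {ω | X ω = a}.indicator (fun _ => f a) ω := by
    funext ω
    classical
    simp only [Set.indicator_apply, Set.mem_ofPred_eq, sum_ite_eq, mem_univ, if_true]
  rw [hdecomp, integral_finsetSum _ fun a _ => (integrable_const _).indicator (hX a)]
  simp only [integral_indicator_const _ (hX _), smul_eq_mul]

theorem measure_fiber_eq_zero_of_uniform [DecidableEq α] [IsProbabilityMeasure P]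
    (hX : ∀ a, MeasurableSet {ω | X ω = a}) {s : Finset α} (hs : s.Nonempty)
    (hlaw : ∀ a ∈ s, P {ω | X ω = a} = ENNReal.ofReal (1 / #s)) {a : α} (ha : a ∉ s) :
    P {ω | X ω = a} = 0 := by
  have htotal : ∑ b, P {ω | X ω = b} = 1 := by
    rw [← measure_univ (μ := P), ← Set.preimage_univ (f := X), ← coe_univ]
    exact sum_measure_preimage_singleton univ fun b _ => hX b
  have hmass : ∑ b ∈ s, P {ω | X ω = b} = 1 := by
    rw [sum_congr rfl hlaw, sum_const, nsmul_eq_mul, one_div,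
      ENNReal.ofReal_inv_of_pos (by exact_mod_cast hs.card_pos), ENNReal.ofReal_natCast,
      ENNReal.mul_inv_cancel (by exact_mod_cast hs.card_pos.ne') (ENNReal.natCast_ne_top _)]
  rw [← sum_add_sum_compl s, hmass] at htotal
  have hcompl := (ENNReal.add_right_inj ENNReal.one_ne_top).1 (htotal.trans (add_zero 1).symm)
  exact sum_eq_zero_iff.1 hcompl a (mem_compl.2 ha)

theorem integral_comp_eq_expect_of_uniform [DecidableEq α] [IsProbabilityMeasure P]
    (hX : ∀ a, MeasurableSet {ω | X ω = a}) {s : Finset α} (hs : s.Nonempty)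
    (hlaw : ∀ a ∈ s, P {ω | X ω = a} = ENNReal.ofReal (1 / #s)) (f : α → ℝ) :
    ∫ ω, f (X ω) ∂P = 𝔼 a ∈ s, f a := by
  have hreal (a : α) : P.real {ω | X ω = a} = if a ∈ s then (1 / #s : ℝ) else 0 := by
    split_ifs with ha
    · rw [measureReal_def, hlaw a ha, ENNReal.toReal_ofReal (by positivity)]
    · rw [measureReal_def, measure_fiber_eq_zero_of_uniform hX hs hlaw ha, ENNReal.toReal_zero]
  simp only [integral_comp_eq_sum_measureReal hX, hreal, ite_mul, zero_mul, sum_ite_mem,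
    univ_inter, expect_eq_sum_div_card, sum_div]
  exact sum_congr rfl fun a _ => by ring

end Probability

theorem hypergeometric_exp_moment_le_binomial_general {Ω : Type*} [MeasurableSpace Ω]
    (P : Measure Ω) [IsProbabilityMeasure P]
    (M D : ℕ) (hDM : D ≤ M)
    (I I' : Ω → Finset (Fin M))
    (hImeas : ∀ t : Finset (Fin M), MeasurableSet {ω | I ω = t})
    (hI'meas : ∀ t : Finset (Fin M), MeasurableSet {ω | I' ω = t})
    (hIlaw : ∀ t : Finset (Fin M), t.card = D →
      P {ω | I ω = t} = ENNReal.ofReal (1 / (M.choose D)))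
    (hI'law : ∀ t : Finset (Fin M), t.card = D →
      P {ω | I' ω = t} = ENNReal.ofReal (1 / (M.choose D)))
    (hindep : ∀ t t' : Finset (Fin M),
      P ({ω | I ω = t} ∩ {ω | I' ω = t'}) = P {ω | I ω = t} * P {ω | I' ω = t'})
    (θ : ℝ) (hθ : 0 ≤ θ) :
    ∫ ω, Real.exp (θ * ((I ω ∩ I' ω).card : ℝ)) ∂P
      ≤ (1 + ((D : ℝ) / M) * (Real.exp θ - 1)) ^ D := by
  classical
  set F := powersetCard D (univ : Finset (Fin M))
  have hF : F.Nonempty := powersetCard_nonempty.2 (by simpa using hDM)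
  have hpair_meas : ∀ p : Finset (Fin M) × Finset (Fin M),
      MeasurableSet {ω | (I ω, I' ω) = p} := by
    rintro ⟨t, t'⟩
    simpa only [Prod.mk.injEq, Set.ofPred_and] using (hImeas t).inter (hI'meas t')
  have hpair_law : ∀ p ∈ F ×ˢ F, P {ω | (I ω, I' ω) = p} = ENNReal.ofReal (1 / #(F ×ˢ F)) := by
    rintro ⟨t, t'⟩ hp
    obtain ⟨ht, ht'⟩ := mem_product.1 hp
    simp only [Prod.mk.injEq, Set.ofPred_and, hindep, hIlaw t (mem_powersetCard_univ.1 ht),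
      hI'law t' (mem_powersetCard_univ.1 ht'), card_product, F, card_powersetCard, card_univ,
      Fintype.card_fin, Nat.cast_mul, one_div, mul_inv]
    rw [ENNReal.ofReal_mul (by positivity)]
  calc ∫ ω, Real.exp (θ * ((I ω ∩ I' ω).card : ℝ)) ∂P
      = 𝔼 p ∈ F ×ˢ F, Real.exp θ ^ #(p.1 ∩ p.2) := by
        simp_rw [mul_comm θ, Real.exp_nat_mul]
        exact integral_comp_eq_expect_of_uniform hpair_meas (hF.product hF) hpair_law
          fun p => Real.exp θ ^ #(p.1 ∩ p.2)
    _ = 𝔼 t ∈ F, 𝔼 t' ∈ F, Real.exp θ ^ #(t ∩ t') :=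
        expect_product' F F fun t t' => Real.exp θ ^ #(t ∩ t')
    _ ≤ 𝔼 _t ∈ F, (1 + ((D : ℝ) / M) * (Real.exp θ - 1)) ^ D := expect_le_expect fun t ht => by
        simpa [mem_powersetCard_univ.1 ht] using
          expect_pow_card_inter_le (by simpa using hDM) (Real.one_le_exp hθ) t
    _ = _ := expect_const hF _

/-- Exponential moment bound for the intersection of two independent uniform random
`D`-subsets of `{1,…,M}`: `E[exp(θ|I ∩ I'|)] ≤ (1 + (D/M)(e^θ - 1))^D`, i.e. the exponential
moment of the hypergeometric variable `|I ∩ I'|` is dominated by that of a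
Binomial(`D`, `D/M`) variable. -/
theorem hypergeometric_exp_moment_le_binomial {Ω : Type*} [MeasurableSpace Ω]
    (P : Measure Ω) [IsProbabilityMeasure P]
    (M D : ℕ) (hM : 0 < M) (hD : 0 < D) (hDM : D ≤ M)
    (I I' : Ω → Finset (Fin M))
    (hImeas : ∀ t : Finset (Fin M), MeasurableSet {ω | I ω = t})
    (hI'meas : ∀ t : Finset (Fin M), MeasurableSet {ω | I' ω = t})
    (hIlaw : ∀ t : Finset (Fin M), t.card = D →
      P {ω | I ω = t} = ENNReal.ofReal (1 / (M.choose D)))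
    (hI'law : ∀ t : Finset (Fin M), t.card = D →
      P {ω | I' ω = t} = ENNReal.ofReal (1 / (M.choose D)))
    (hindep : ∀ t t' : Finset (Fin M),
      P ({ω | I ω = t} ∩ {ω | I' ω = t'}) = P {ω | I ω = t} * P {ω | I' ω = t'})
    (θ : ℝ) (hθ : 0 ≤ θ) :
    ∫ ω, Real.exp (θ * ((I ω ∩ I' ω).card : ℝ)) ∂P
      ≤ (1 + ((D : ℝ) / M) * (Real.exp θ - 1)) ^ D :=
  hypergeometric_exp_moment_le_binomial_general P M D hDM I I' hImeas hI'meas hIlaw hI'law hindep θ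
    hθ
end

section
/- Let R > 0, R' > 0, R'' ≥ 2, δ > 0, γ > 0, let J ∈ ℕ, M = 2^J, let D be an integer with 1 ≤ D ≤ M, and let r > 0. Let φ = 1_{[0,1/2)} − 1_{[1/2,1)}, set φ_{M,i}(x) = φ(Mx − i + 1) for i = 1,…,M, and define S_{M,D,r} = { 1_{[0,1]} + r·√(M/D)·Σ_{i=1}^{M} Δ_i ξ_i φ_{M,i} : ξ ∈ {−1,+1}^M, Δ ∈ {0,1}^M, Σ_{i=1}^{M} Δ_i = D }. If r² ≤ min( D/M , R²·M^{−2δ} , R'^{2(1+2γ)}·D^{−2γ} ), then S_{M,D,r} ⊆ B^δ_{2,∞}(R) ∩ W_γ(R') ∩ L^∞(R''), and every s ∈ S_{M,D,r} satisfies d(s, S_0) = r, where S_0 is the set of constant functions on [0,1] and d is the L²([0,1]) distance. -/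
open MeasureTheory Filter Set
open scoped ENNReal

noncomputable section

/-- The Haar mother wavelet `ψ = 1_{[0,1/2)} - 1_{[1/2,1)}`. -/
def haarPsi (x : ℝ) : ℝ :=
  Set.indicator (Set.Ico (0 : ℝ) (1 / 2)) (fun _ => (1 : ℝ)) x
    - Set.indicator (Set.Ico (1 / 2 : ℝ) 1) (fun _ => (1 : ℝ)) x

/-- The Haar function `φ_{(j,k)}(x) = 2^{j/2} ψ(2^j x - k)`. -/
def haarFn (j k : ℕ) (x : ℝ) : ℝ := (2 : ℝ) ^ ((j : ℝ) / 2) * haarPsi ((2 : ℝ) ^ j * x - k)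

/-- Haar coefficient `α_{(j,k)} = ⟨s, φ_{(j,k)}⟩`. -/
def haarCoeff (s : ℝ → ℝ) (j k : ℕ) : ℝ := ∫ x in Set.Icc (0 : ℝ) 1, s x * haarFn j k x

/-- `α₀ = ⟨s, φ₀⟩ = ∫₀¹ s`. -/
def meanVal (s : ℝ → ℝ) : ℝ := ∫ x in Set.Icc (0 : ℝ) 1, s x

/-- Squared L² distance from `s` to the set of constant functions on `[0,1]`. -/
def distSqToConst (s : ℝ → ℝ) : ℝ := ∫ x in Set.Icc (0 : ℝ) 1, (s x - meanVal s) ^ 2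

/-- L² distance from `s` to the set `S₀` of constant functions on `[0,1]`. -/
def sepDist (s : ℝ → ℝ) : ℝ := Real.sqrt (distSqToConst s)

/-- Lebesgue measure restricted to `[0,1]` (the uniform distribution on `[0,1]`). -/
def unif01 : Measure ℝ := volume.restrict (Set.Icc (0 : ℝ) 1)

/-- The Besov body `B^δ_{2,∞}(R)`. -/
def besovBody (δ R : ℝ) : Set (ℝ → ℝ) :=
  {s | (∀ x ∈ Set.Icc (0 : ℝ) 1, 0 ≤ s x) ∧ MemLp s 2 unif01 ∧
    ∀ j : ℕ, ∑ k ∈ Finset.range (2 ^ j), (haarCoeff s j k) ^ 2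
      ≤ R ^ 2 * (2 : ℝ) ^ (-(2 * (j : ℝ) * δ))}

/-- The weak Besov body `W_γ(R')`. -/
def weakBesovBody (γ R' : ℝ) : Set (ℝ → ℝ) :=
  {s | (∀ x ∈ Set.Icc (0 : ℝ) 1, 0 ≤ s x) ∧ MemLp s 2 unif01 ∧
    ∀ t : ℝ, 0 < t →
      ∑' j : ℕ, ∑ k ∈ Finset.range (2 ^ j),
          (if (haarCoeff s j k) ^ 2 ≤ t then (haarCoeff s j k) ^ 2 else 0)
        ≤ R' ^ 2 * t ^ (2 * γ / (1 + 2 * γ))}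

/-- The ball `L^∞(R'')` of functions bounded by `R''` on `[0,1]`. -/
def linfBall (R'' : ℝ) : Set (ℝ → ℝ) := {s | ∀ x ∈ Set.Icc (0 : ℝ) 1, |s x| ≤ R''}

/-- Observation space: the number of points and the sequence of points. -/
abbrev Obs : Type := ℕ × (ℕ → ℝ)

/-- Law of one point of the process: density `s/∫s` on `[0,1]`
(uniform as irrelevant convention if `∫ s = 0`). -/
def pointLaw (s : ℝ → ℝ) : Measure ℝ :=
  if meanVal s = 0 then unif01
  else unif01.withDensity fun x => ENNReal.ofReal (s x / meanVal s)

/-- Padding of a finite vector into a sequence. -/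
def pad (n : ℕ) (v : Fin n → ℝ) : ℕ → ℝ := fun i => if h : i < n then v ⟨i, h⟩ else 0

/-- Poisson probability `e^{-μ} μ^n / n!`. -/
def poissonWeight (μ : ℝ) (n : ℕ) : ℝ≥0∞ := ENNReal.ofReal (Real.exp (-μ) * μ ^ n / n.factorial)

/-- Product of `n` i.i.d. copies of a law. -/
def iidLaw (ν : Measure ℝ) (n : ℕ) : Measure (Fin n → ℝ) := Measure.pi fun _ => ν

/-- The law `P_s` of the observation `(N_L, (X_1, …, X_{N_L}))` of a Poisson process with
intensity `s` w.r.t. `L·dx` on `[0,1]`: `N_L` is Poisson with parameter `L ∫₀¹ s`, and given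
`N_L = n` the points are `n` i.i.d. draws from `s/∫s` (padded by `0` beyond the `N_L`-th
coordinate, which a test may not look at). -/
def obsLaw (L : ℝ) (s : ℝ → ℝ) : Measure Obs :=
  Measure.sum fun n : ℕ =>
    poissonWeight (L * meanVal s) n •
      Measure.map (fun v => (n, pad n v)) (iidLaw (pointLaw s) n)

/-- A test: a measurable `{0,1}`-valued function of the observation, depending on the sequence
of points only through its first `N_L` coordinates. -/
def IsTest (Φ : Obs → Bool) : Prop :=
  Measurable Φ ∧ ∀ n : ℕ, ∀ x y : ℕ → ℝ, (∀ i < n, x i = y i) → Φ (n, x) = Φ (n, y)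

/-- A level `α` test: `P_s(Φ = 1) ≤ α` for every nonnegative constant intensity. -/
def IsLevel (L α : ℝ) (Φ : Obs → Bool) : Prop :=
  ∀ c : ℝ, 0 ≤ c → obsLaw L (fun _ => c) {ω | Φ ω = true} ≤ ENNReal.ofReal α

/-- Uniform separation rate `ρ(Φ, S₁, β)` of a test over a class `S₁`. -/
def sepRate (L : ℝ) (Φ : Obs → Bool) (S₁ : Set (ℝ → ℝ)) (β : ℝ) : ℝ :=
  sInf {ρ : ℝ | 0 < ρ ∧ ∀ s ∈ S₁, ρ < sepDist s →
    obsLaw L s {ω | Φ ω = false} ≤ ENNReal.ofReal β}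

/-- Minimax separation rate `ρ̲_L(S₁, α, β)`: infimum of the uniform separation rates over all
level `α` tests. -/
def minimaxRate (L : ℝ) (S₁ : Set (ℝ → ℝ)) (α β : ℝ) : ℝ :=
  sInf {r : ℝ | ∃ Φ : Obs → Bool, IsTest Φ ∧ IsLevel L α Φ ∧ r = sepRate L Φ S₁ β}

noncomputable section

/-- `φ_{M,i}(x) = φ(Mx - i + 1)` for `i = 1,…,M` (here indexed by `i ∈ Fin M`, so the argument
is `Mx - i`), where `φ`, defined on `[0,1)`, is extended by `0` outside. -/
def scaledPhi (φ : ℝ → ℝ) (M : ℕ) (i : ℕ) (x : ℝ) : ℝ :=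
  Set.indicator (Set.Ico (0 : ℝ) 1) φ ((M : ℝ) * x - i)

/-- The finite set of alternatives
`S_{M,D,r} = { ρ 1_{[0,1]} + r √(M/D) Σ_{i=1}^M Δ_i ξ_i φ_{M,i} :
ξ ∈ {-1,+1}^M, Δ ∈ {0,1}^M, Σ_i Δ_i = D }`. -/
def SMDr (M D : ℕ) (ρ r : ℝ) (φ : ℝ → ℝ) : Set (ℝ → ℝ) :=
  {s | ∃ ξ Δ : Fin M → ℝ,
    (∀ i, ξ i = 1 ∨ ξ i = -1) ∧ (∀ i, Δ i = 0 ∨ Δ i = 1) ∧ (∑ i, Δ i = (D : ℝ)) ∧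
    s = fun x => ρ * Set.indicator (Set.Icc (0 : ℝ) 1) (fun _ => (1 : ℝ)) x
      + r * Real.sqrt ((M : ℝ) / D) * ∑ i : Fin M, Δ i * ξ i * scaledPhi φ M i x}

end

/-!
Write `ψ_{j,k}` for `haarFn j k`. On `[0,1]` every `s ∈ S_{M,D,r}` (with `M = 2^J`) equals
`1 + ∑_{k < 2^J} a_k ψ_{J,k}` with `a_k = (r/√D) Δ_k ξ_k`, since `√M · φ_{M,k} = ψ_{J,k}`.
By orthonormality of the Haar system (and `∫ ψ_{j,k} = 0`), the Haar coefficients of `s` are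
the `a_k` at level `J` and vanish at every other level, its mean is `1`, and its squared
distance to the constants is `∑ a_k² = r² Σ Δ_k / D = r²`. Each `a_k²` is `0` or `r²/D`, which
makes the Besov and weak Besov conditions explicit inequalities on `r`. Since the `ψ_{J,k}`
have disjoint supports and `2^J a_k² ≤ 2^J r²/D ≤ 1`, `|s - 1| ≤ 1` on `[0,1]`, whence
`0 ≤ s ≤ 2`.
-/

lemma integral_comp_mul_sub (f : ℝ → ℝ) {a : ℝ} (ha : 0 < a) (b : ℝ) :
    ∫ x, f (a * x - b) = a⁻¹ * ∫ y, f y := by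
  rw [Measure.integral_comp_mul_left (fun y => f (y - b)) a, integral_sub_right_eq_self f b,
    abs_of_pos (inv_pos.2 ha), smul_eq_mul]

lemma le_mul_rpow_div {x D R' γ : ℝ} (hx : 0 ≤ x) (hD : 0 < D) (hR' : 0 ≤ R')
    (hγ : 0 < 1 + 2 * γ) (h : x ≤ R' ^ (2 * (1 + 2 * γ)) * D ^ (-(2 * γ))) :
    x ≤ R' ^ 2 * (x / D) ^ (2 * γ / (1 + 2 * γ)) := by
  set p := 1 + 2 * γ
  -- interpolate: `x = x ^ (1/p) * x ^ (2γ/p)`, and bound the first factor by the hypothesis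
  have hroot : x ^ p⁻¹ ≤ R' ^ 2 * D ^ (-(2 * γ / p)) := by
    calc x ^ p⁻¹ ≤ (R' ^ (2 * p) * D ^ (-(2 * γ))) ^ p⁻¹ := Real.rpow_le_rpow hx h (by positivity)
      _ = R' ^ 2 * D ^ (-(2 * γ / p)) := by
        rw [Real.mul_rpow (by positivity) (by positivity), ← Real.rpow_mul hR',
          ← Real.rpow_mul hD.le, mul_inv_cancel_right₀ hγ.ne', neg_mul, div_eq_mul_inv,
          Real.rpow_two]
  have hexp : p⁻¹ + 2 * γ / p = 1 := by
    rw [inv_eq_one_div, ← add_div, div_eq_one_iff_eq hγ.ne']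
  calc x = x ^ p⁻¹ * x ^ (2 * γ / p) := by
        rw [← Real.rpow_add' hx (by rw [hexp]; exact one_ne_zero), hexp, Real.rpow_one]
    _ ≤ R' ^ 2 * D ^ (-(2 * γ / p)) * x ^ (2 * γ / p) := by gcongr
    _ = R' ^ 2 * (x / D) ^ (2 * γ / p) := by
        rw [Real.div_rpow hx hD.le, Real.rpow_neg hD.le]; ring

lemma sum_ite_le_of_eq_zero_or_eq {ι : Type*} (S : Finset ι) {b : ι → ℝ} {u t : ℝ}
    (hb : ∀ i, b i = 0 ∨ b i = u) :
    ∑ i ∈ S, (if b i ≤ t then b i else 0) = if u ≤ t then ∑ i ∈ S, b i else 0 := by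
  split_ifs with hut
  · refine Finset.sum_congr rfl fun i _ => ?_
    rcases hb i with h | h <;> simp [h, hut]
  · refine Finset.sum_eq_zero fun i _ => ?_
    rcases hb i with h | h <;> simp [h, hut]

lemma haarPsi_eq_floor (y : ℝ) :
    haarPsi y = (if ⌊2 * y⌋ = 0 then 1 else 0) - if ⌊2 * y⌋ = 1 then 1 else 0 := by
  simp only [haarPsi, Set.indicator_apply, Set.mem_Ico, Int.floor_eq_iff]
  push_cast
  congr 1 <;> congr 1 <;> apply propext <;> constructor <;> rintro ⟨_, _⟩ <;> constructor <;>
    linarith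

lemma haarPsi_congr {y y' : ℝ} (h : ⌊2 * y⌋ = ⌊2 * y'⌋) : haarPsi y = haarPsi y' := by
  rw [haarPsi_eq_floor, haarPsi_eq_floor, h]

lemma mem_Ico_of_haarPsi_ne_zero {y : ℝ} (h : haarPsi y ≠ 0) : y ∈ Ico (0 : ℝ) 1 := by
  contrapose! h
  have h₁ : y ∉ Ico (0 : ℝ) (1 / 2) := fun hy => h ⟨hy.1, by linarith [hy.2]⟩
  have h₂ : y ∉ Ico (1 / 2 : ℝ) 1 := fun hy => h ⟨by linarith [hy.1], hy.2⟩
  rw [haarPsi, indicator_of_notMem h₁, indicator_of_notMem h₂, sub_zero]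

lemma haarPsi_sq (y : ℝ) : haarPsi y ^ 2 = (Ico (0 : ℝ) 1).indicator 1 y := by
  simp only [haarPsi, Set.indicator_apply, Set.mem_Ico, Pi.one_apply]
  split_ifs <;> grind

lemma abs_haarPsi_le (y : ℝ) : |haarPsi y| ≤ 1 := by
  rw [← sq_le_one_iff_abs_le_one, haarPsi_sq]
  exact Set.indicator_le_self' (fun _ _ => zero_le_one) y

lemma measurable_haarPsi : Measurable haarPsi :=
  (measurable_const.indicator measurableSet_Ico).sub (measurable_const.indicator measurableSet_Ico)

lemma integral_haarPsi : ∫ y, haarPsi y = 0 := by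
  have hint : ∀ a b : ℝ, Integrable ((Ico a b).indicator fun _ => (1 : ℝ)) :=
    fun a b => (integrable_indicator_iff measurableSet_Ico).2 (integrableOn_const (by simp))
  unfold haarPsi
  rw [integral_sub (hint _ _) (hint _ _), integral_indicator_const _ measurableSet_Ico,
    integral_indicator_const _ measurableSet_Ico]
  simp [measureReal_def, Real.volume_Ico]
  norm_num

lemma integral_haarPsi_sq : ∫ y, haarPsi y ^ 2 = 1 := by
  simp only [haarPsi_sq]
  rw [integral_indicator_one measurableSet_Ico]
  simp [measureReal_def, Real.volume_Ico]

lemma two_rpow_half_sq (j : ℕ) : ((2 : ℝ) ^ ((j : ℝ) / 2)) ^ 2 = 2 ^ j := by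
  rw [← Real.rpow_mul_natCast zero_le_two, Nat.cast_ofNat, div_mul_cancel₀ _ two_ne_zero,
    Real.rpow_natCast]

lemma haarFn_sq (j k : ℕ) (x : ℝ) : haarFn j k x ^ 2 = 2 ^ j * haarPsi (2 ^ j * x - k) ^ 2 := by
  rw [haarFn, mul_pow, two_rpow_half_sq]

lemma haarFn_sq_le (j k : ℕ) (x : ℝ) : haarFn j k x ^ 2 ≤ 2 ^ j := by
  rw [haarFn_sq]
  have := (sq_le_one_iff_abs_le_one _).2 (abs_haarPsi_le (2 ^ j * x - k))
  nlinarith [pow_pos (two_pos : (0 : ℝ) < 2) j]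

lemma measurable_haarFn (j k : ℕ) : Measurable (haarFn j k) :=
  measurable_const.mul
    (measurable_haarPsi.comp ((measurable_const.mul measurable_id).sub measurable_const))

lemma integral_haarFn (j k : ℕ) : ∫ x, haarFn j k x = 0 := by
  unfold haarFn
  rw [integral_const_mul,
    integral_comp_mul_sub haarPsi (by positivity), integral_haarPsi, mul_zero, mul_zero]

lemma integral_haarFn_sq (j k : ℕ) : ∫ x, haarFn j k x ^ 2 = 1 := by
  simp only [haarFn_sq]
  rw [integral_const_mul, integral_comp_mul_sub (fun y => haarPsi y ^ 2) (by positivity),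
    integral_haarPsi_sq, mul_one, mul_inv_cancel₀ (by positivity)]

lemma floor_two_pow_mul_of_haarFn_ne_zero {j k : ℕ} {x : ℝ} (h : haarFn j k x ≠ 0) :
    ⌊(2 : ℝ) ^ j * x⌋ = k := by
  rw [← sub_eq_zero, ← Int.floor_sub_natCast, Int.floor_eq_zero_iff]
  exact mem_Ico_of_haarPsi_ne_zero (right_ne_zero_of_mul h)

lemma haarFn_congr {j k : ℕ} {x y : ℝ} (h : ⌊(2 : ℝ) ^ (j + 1) * x⌋ = ⌊(2 : ℝ) ^ (j + 1) * y⌋) :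
    haarFn j k x = haarFn j k y := by
  have key : ∀ z : ℝ, ⌊2 * ((2 : ℝ) ^ j * z - k)⌋ = ⌊(2 : ℝ) ^ (j + 1) * z⌋ - (2 * k : ℕ) := by
    intro z
    rw [← Int.floor_sub_natCast]
    congr 1
    push_cast
    ring
  unfold haarFn
  rw [haarPsi_congr (y' := 2 ^ j * y - k) (by simp only [key, h])]

lemma floor_two_pow_mul_eq_div {ℓ L : ℕ} (h : ℓ ≤ L) (x : ℝ) :
    ⌊(2 : ℝ) ^ ℓ * x⌋ = ⌊(2 : ℝ) ^ L * x⌋ / (2 ^ (L - ℓ) : ℕ) := by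
  rw [← Int.floor_div_natCast]
  congr 1
  rw [Nat.cast_pow, Nat.cast_ofNat, mul_div_right_comm]
  congr 1
  rw [eq_div_iff (by positivity), ← pow_add, Nat.add_sub_cancel' h]

lemma haarFn_eq_zero_of_notMem {j k : ℕ} (hk : k < 2 ^ j) {x : ℝ} (hx : x ∉ Icc (0 : ℝ) 1) :
    haarFn j k x = 0 := by
  contrapose! hx
  have h := Int.floor_eq_iff.1 (floor_two_pow_mul_of_haarFn_ne_zero hx)
  have hk' : (k : ℝ) + 1 ≤ 2 ^ j := by exact_mod_cast hk
  have hpos : (0 : ℝ) < 2 ^ j := by positivity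
  push_cast at h
  constructor <;> nlinarith

lemma setIntegral_haarFn {j k : ℕ} (hk : k < 2 ^ j) : ∫ x in Icc (0 : ℝ) 1, haarFn j k x = 0 := by
  rw [setIntegral_eq_integral_of_forall_compl_eq_zero fun x hx => haarFn_eq_zero_of_notMem hk hx,
    integral_haarFn]

lemma setIntegral_haarFn_sq {j k : ℕ} (hk : k < 2 ^ j) :
    ∫ x in Icc (0 : ℝ) 1, haarFn j k x ^ 2 = 1 := by
  rw [setIntegral_eq_integral_of_forall_compl_eq_zero fun x hx => by
    rw [haarFn_eq_zero_of_notMem hk hx, zero_pow two_ne_zero], integral_haarFn_sq]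

lemma exists_haarFn_mul_eq_const_mul {j J : ℕ} (hjJ : j < J) (k i : ℕ) :
    ∃ C, ∀ x, haarFn j k x * haarFn J i x = C * haarFn J i x := by
  have hfloor : ⌊(2 : ℝ) ^ J * (i / 2 ^ J)⌋ = i := by
    rw [mul_div_cancel₀ _ (by positivity), Int.floor_natCast]
  refine ⟨haarFn j k (i / 2 ^ J), fun x => ?_⟩
  by_cases hx : haarFn J i x = 0
  · rw [hx, mul_zero, mul_zero]
  · rw [haarFn_congr (y := i / 2 ^ J)]
    rw [floor_two_pow_mul_eq_div hjJ, floor_two_pow_mul_eq_div hjJ, hfloor,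
      floor_two_pow_mul_of_haarFn_ne_zero hx]

lemma setIntegral_haarFn_mul_haarFn_of_lt {j J k i : ℕ} (hjJ : j < J) (hi : i < 2 ^ J) :
    ∫ x in Icc (0 : ℝ) 1, haarFn j k x * haarFn J i x = 0 := by
  obtain ⟨C, hC⟩ := exists_haarFn_mul_eq_const_mul hjJ k i
  simp only [hC]
  rw [integral_const_mul, setIntegral_haarFn hi, mul_zero]

lemma haarFn_mul_haarFn_of_ne {j k i : ℕ} (hki : k ≠ i) (x : ℝ) :
    haarFn j k x * haarFn j i x = 0 := by
  by_contra h
  have hk := floor_two_pow_mul_of_haarFn_ne_zero (left_ne_zero_of_mul h)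
  have hi := floor_two_pow_mul_of_haarFn_ne_zero (right_ne_zero_of_mul h)
  exact hki (by exact_mod_cast hk.symm.trans hi)

lemma setIntegral_haarFn_mul_haarFn {j J k i : ℕ} (hk : k < 2 ^ j) (hi : i < 2 ^ J) :
    ∫ x in Icc (0 : ℝ) 1, haarFn j k x * haarFn J i x = if j = J ∧ k = i then 1 else 0 := by
  rcases lt_trichotomy j J with hjJ | rfl | hJj
  · rw [setIntegral_haarFn_mul_haarFn_of_lt hjJ hi, if_neg (by omega)]
  · by_cases hki : k = i
    · subst hki
      simp only [← sq, setIntegral_haarFn_sq hk, and_self, if_true]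
    · simp only [haarFn_mul_haarFn_of_ne hki, integral_zero, hki, and_false, if_false]
  · simp only [mul_comm (haarFn j k _)]
    rw [setIntegral_haarFn_mul_haarFn_of_lt hJj hk, if_neg (by omega)]

lemma memLp_haarFn (p : ℝ≥0∞) (j k : ℕ) : MemLp (haarFn j k) p (volume.restrict (Icc (0 : ℝ) 1)) :=
  .of_bound (measurable_haarFn j k).aestronglyMeasurable _
    (ae_of_all _ fun x => Real.abs_le_sqrt (haarFn_sq_le j k x))

lemma integrable_haarFn (j k : ℕ) : Integrable (haarFn j k) (volume.restrict (Icc (0 : ℝ) 1)) :=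
  memLp_one_iff_integrable.1 (memLp_haarFn 1 j k)

lemma integrable_mul_haarFn {f : ℝ → ℝ} (hf : Integrable f (volume.restrict (Icc (0 : ℝ) 1)))
    (j k : ℕ) : Integrable (fun x => f x * haarFn j k x) (volume.restrict (Icc (0 : ℝ) 1)) :=
  hf.mul_bdd (measurable_haarFn j k).aestronglyMeasurable
    (ae_of_all _ fun x => Real.abs_le_sqrt (haarFn_sq_le j k x))

def haarSum (J : ℕ) (a : ℕ → ℝ) (x : ℝ) : ℝ := ∑ i ∈ Finset.range (2 ^ J), a i * haarFn J i x

section HaarSum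

variable {s : ℝ → ℝ} {J : ℕ} {a : ℕ → ℝ}

lemma memLp_haarSum (p : ℝ≥0∞) : MemLp (haarSum J a) p (volume.restrict (Icc (0 : ℝ) 1)) :=
  memLp_finsetSum _ fun i _ => (memLp_haarFn p J i).const_mul (a i)

lemma integrable_haarSum : Integrable (haarSum J a) (volume.restrict (Icc (0 : ℝ) 1)) :=
  memLp_one_iff_integrable.1 (memLp_haarSum 1)

lemma setIntegral_haarSum : ∫ x in Icc (0 : ℝ) 1, haarSum J a x = 0 := by
  unfold haarSum
  rw [integral_finsetSum _ fun i _ => (integrable_haarFn J i).const_mul (a i)]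
  refine Finset.sum_eq_zero fun i hi => ?_
  rw [integral_const_mul, setIntegral_haarFn (Finset.mem_range.1 hi), mul_zero]

lemma setIntegral_haarSum_mul_haarFn {j k : ℕ} (hk : k < 2 ^ j) :
    ∫ x in Icc (0 : ℝ) 1, haarSum J a x * haarFn j k x = if j = J then a k else 0 := by
  simp only [haarSum, Finset.sum_mul, mul_assoc]
  rw [integral_finsetSum _ fun i _ =>
    (integrable_mul_haarFn (integrable_haarFn J i) j k).const_mul _]
  simp only [integral_const_mul]
  rw [Finset.sum_congr rfl fun i hi => by
    rw [setIntegral_haarFn_mul_haarFn (Finset.mem_range.1 hi) hk]]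
  split_ifs with hj
  · subst hj
    rw [Finset.sum_eq_single_of_mem k (Finset.mem_range.2 hk) fun i _ hik => by simp [hik]]
    simp
  · simp [Ne.symm hj]

lemma setIntegral_haarSum_sq :
    ∫ x in Icc (0 : ℝ) 1, haarSum J a x ^ 2 = ∑ i ∈ Finset.range (2 ^ J), a i ^ 2 := by
  have hexpand : ∀ x, haarSum J a x ^ 2
      = ∑ i ∈ Finset.range (2 ^ J), a i * (haarSum J a x * haarFn J i x) := fun x => by
    rw [sq]
    nth_rewrite 2 [haarSum]
    rw [Finset.mul_sum]
    exact Finset.sum_congr rfl fun i _ => by ring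
  simp only [hexpand]
  rw [integral_finsetSum _ fun i _ => (integrable_mul_haarFn integrable_haarSum J i).const_mul _]
  refine Finset.sum_congr rfl fun i hi => ?_
  rw [integral_const_mul, setIntegral_haarSum_mul_haarFn (Finset.mem_range.1 hi), if_pos rfl, sq]

-- The Haar functions of one level have disjoint supports: at most one term is nonzero.
lemma abs_haarSum_le {B : ℝ} (hB : 0 ≤ B) (ha : ∀ i < 2 ^ J, 2 ^ J * a i ^ 2 ≤ B ^ 2) (x : ℝ) :
    |haarSum J a x| ≤ B := by
  by_cases hx : ∃ i ∈ Finset.range (2 ^ J), haarFn J i x ≠ 0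
  · obtain ⟨i, hi, hix⟩ := hx
    rw [haarSum, Finset.sum_eq_single_of_mem i hi fun i' _ hne => by
      rw [(mul_eq_zero.1 (haarFn_mul_haarFn_of_ne hne x)).resolve_right hix, mul_zero]]
    refine abs_le_of_sq_le_sq ?_ hB
    calc (a i * haarFn J i x) ^ 2 ≤ a i ^ 2 * 2 ^ J := by
          rw [mul_pow]; exact mul_le_mul_of_nonneg_left (haarFn_sq_le J i x) (sq_nonneg _)
      _ ≤ B ^ 2 := by rw [mul_comm]; exact ha i (Finset.mem_range.1 hi)
  · push Not at hx
    rw [haarSum, Finset.sum_eq_zero fun i hi => by rw [hx i hi, mul_zero], abs_zero]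
    exact hB

lemma haarCoeff_of_eqOn (hs : EqOn s (fun x => 1 + haarSum J a x) (Icc 0 1)) {j k : ℕ}
    (hk : k < 2 ^ j) : haarCoeff s j k = if j = J then a k else 0 := by
  have hint := integrable_mul_haarFn (integrable_haarSum (J := J) (a := a)) j k
  rw [haarCoeff,
    setIntegral_congr_fun measurableSet_Icc fun x hx => by rw [hs hx, add_mul, one_mul],
    integral_add (integrable_haarFn j k) hint, setIntegral_haarFn hk, zero_add,
    setIntegral_haarSum_mul_haarFn hk]

lemma sum_range_haarCoeff_of_eqOn (hs : EqOn s (fun x => 1 + haarSum J a x) (Icc 0 1))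
    (g : ℝ → ℝ) (hg : g 0 = 0) (j : ℕ) :
    ∑ k ∈ Finset.range (2 ^ j), g (haarCoeff s j k)
      = if j = J then ∑ k ∈ Finset.range (2 ^ J), g (a k) else 0 := by
  rw [Finset.sum_congr rfl fun k hk => by rw [haarCoeff_of_eqOn hs (Finset.mem_range.1 hk)]]
  split_ifs with hj
  · subst hj; rfl
  · simp [hg]

lemma meanVal_of_eqOn (hs : EqOn s (fun x => 1 + haarSum J a x) (Icc 0 1)) : meanVal s = 1 := by
  rw [meanVal, setIntegral_congr_fun measurableSet_Icc hs,
    integral_add (integrable_const 1) integrable_haarSum, setIntegral_haarSum]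
  simp [measureReal_def]

lemma distSqToConst_of_eqOn (hs : EqOn s (fun x => 1 + haarSum J a x) (Icc 0 1)) :
    distSqToConst s = ∑ i ∈ Finset.range (2 ^ J), a i ^ 2 := by
  rw [distSqToConst, meanVal_of_eqOn hs,
    setIntegral_congr_fun measurableSet_Icc fun x hx => by rw [hs hx, add_sub_cancel_left],
    setIntegral_haarSum_sq]

lemma memLp_of_eqOn (hs : EqOn s (fun x => 1 + haarSum J a x) (Icc 0 1)) :
    MemLp s 2 unif01 := by
  have hsum : MemLp ((fun _ => (1 : ℝ)) + haarSum J a) 2 (volume.restrict (Icc (0 : ℝ) 1)) :=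
    (memLp_const (1 : ℝ)).add (memLp_haarSum 2)
  exact hsum.ae_eq ((ae_restrict_iff' measurableSet_Icc).2 (ae_of_all _ fun x hx => (hs hx).symm))

lemma mem_besovBody_of_eqOn (hs : EqOn s (fun x => 1 + haarSum J a x) (Icc 0 1))
    (hnonneg : ∀ x ∈ Icc (0 : ℝ) 1, 0 ≤ s x) {δ R : ℝ}
    (h : ∑ i ∈ Finset.range (2 ^ J), a i ^ 2 ≤ R ^ 2 * (2 : ℝ) ^ (-(2 * (J : ℝ) * δ))) :
    s ∈ besovBody δ R := by
  refine ⟨hnonneg, memLp_of_eqOn hs, fun j => ?_⟩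
  rw [sum_range_haarCoeff_of_eqOn hs (· ^ 2) (zero_pow two_ne_zero) j]
  split_ifs with hj
  · rwa [hj]
  · positivity

lemma mem_weakBesovBody_of_eqOn (hs : EqOn s (fun x => 1 + haarSum J a x) (Icc 0 1))
    (hnonneg : ∀ x ∈ Icc (0 : ℝ) 1, 0 ≤ s x) {γ R' u : ℝ} (hγ : 0 ≤ γ) (hu : 0 ≤ u)
    (ha : ∀ i, a i ^ 2 = 0 ∨ a i ^ 2 = u)
    (h : ∑ i ∈ Finset.range (2 ^ J), a i ^ 2 ≤ R' ^ 2 * u ^ (2 * γ / (1 + 2 * γ))) :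
    s ∈ weakBesovBody γ R' := by
  refine ⟨hnonneg, memLp_of_eqOn hs, fun t ht => ?_⟩
  have hlevel := sum_range_haarCoeff_of_eqOn hs (fun α => if α ^ 2 ≤ t then α ^ 2 else 0)
    (by simp [ht.le])
  beta_reduce at hlevel
  rw [tsum_eq_single J fun j hj => by rw [hlevel j, if_neg hj], hlevel J, if_pos rfl,
    sum_ite_le_of_eq_zero_or_eq _ ha]
  split_ifs with hut
  · exact h.trans (by gcongr)
  · positivity

end HaarSum

lemma sqrt_mul_scaledPhi_haarPsi (J i : ℕ) (x : ℝ) :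
    √(2 ^ J : ℕ) * scaledPhi haarPsi (2 ^ J) i x = haarFn J i x := by
  have hsupp : (Ico (0 : ℝ) 1).indicator haarPsi = haarPsi :=
    indicator_eq_self.2 fun y hy => mem_Ico_of_haarPsi_ne_zero hy
  rw [scaledPhi, hsupp, haarFn, Nat.cast_pow, Nat.cast_ofNat, Real.sqrt_eq_rpow,
    ← Real.rpow_natCast, ← Real.rpow_mul zero_le_two, mul_one_div]

lemma exists_haarSum_of_mem_SMDr {J D : ℕ} {r : ℝ} {s : ℝ → ℝ} (hD : D ≠ 0)
    (hs : s ∈ SMDr (2 ^ J) D 1 r haarPsi) :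
    ∃ a : ℕ → ℝ, EqOn s (fun x => 1 + haarSum J a x) (Icc 0 1) ∧
      (∀ i, a i ^ 2 = 0 ∨ a i ^ 2 = r ^ 2 / D) ∧
      ∑ i ∈ Finset.range (2 ^ J), a i ^ 2 = r ^ 2 := by
  obtain ⟨ξ, Δ, hξ, hΔ, hΔsum, rfl⟩ := hs
  have hDpos : (0 : ℝ) < D := by positivity
  set a : ℕ → ℝ := fun k => if h : k < 2 ^ J then r / √D * Δ ⟨k, h⟩ * ξ ⟨k, h⟩ else 0
  have ha : ∀ i : Fin (2 ^ J), a i = r / √D * Δ i * ξ i := fun i => by simp [a, i.isLt]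
  have ha_sq : ∀ i : Fin (2 ^ J), a i ^ 2 = r ^ 2 / D * Δ i := fun i => by
    rw [ha, mul_pow, mul_pow, div_pow, Real.sq_sqrt hDpos.le]
    rcases hΔ i with h | h <;> rcases hξ i with h' | h' <;> simp [h, h']
  refine ⟨a, fun x hx => ?_, fun k => ?_, ?_⟩
  · simp only
    rw [indicator_of_mem hx, haarSum, ← Fin.sum_univ_eq_sum_range (fun k => a k * haarFn J k x),
      Finset.mul_sum]
    simp only [mul_one]
    congr 1
    refine Finset.sum_congr rfl fun i _ => ?_
    rw [ha, ← sqrt_mul_scaledPhi_haarPsi, Real.sqrt_div' _ hDpos.le]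
    field_simp
  · by_cases hk : k < 2 ^ J
    · have := ha_sq ⟨k, hk⟩
      rcases hΔ ⟨k, hk⟩ with h | h <;> simp_all
    · simp [a, hk]
  · rw [← Fin.sum_univ_eq_sum_range (fun k => a k ^ 2), Finset.sum_congr rfl fun i _ => ha_sq i,
      ← Finset.mul_sum, hΔsum]
    field_simp

theorem net_subset_besov_bodies_general (R R' R'' δ γ : ℝ) (hR' : 0 < R')
    (hR'' : 2 ≤ R'') (hγ : 0 < γ)
    (J : ℕ) (D : ℕ) (hD : 1 ≤ D) (r : ℝ) (hr : 0 < r)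
    (hr2 : r ^ 2 ≤ min ((D : ℝ) / 2 ^ J)
      (min (R ^ 2 * ((2 : ℝ) ^ J) ^ (-(2 * δ))) (R' ^ (2 * (1 + 2 * γ)) * (D : ℝ) ^ (-(2 * γ))))) :
    SMDr (2 ^ J) D 1 r haarPsi ⊆ besovBody δ R ∩ weakBesovBody γ R' ∩ linfBall R'' ∧
    ∀ s ∈ SMDr (2 ^ J) D 1 r haarPsi, sepDist s = r := by
  obtain ⟨hrM, hrR, hrR'⟩ : r ^ 2 ≤ D / 2 ^ J ∧ r ^ 2 ≤ R ^ 2 * ((2 : ℝ) ^ J) ^ (-(2 * δ)) ∧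
      r ^ 2 ≤ R' ^ (2 * (1 + 2 * γ)) * (D : ℝ) ^ (-(2 * γ)) := by
    simpa only [le_min_iff] using hr2
  have hDpos : (0 : ℝ) < D := by exact_mod_cast hD
  suffices h : ∀ s ∈ SMDr (2 ^ J) D 1 r haarPsi,
      s ∈ besovBody δ R ∩ weakBesovBody γ R' ∩ linfBall R'' ∧ sepDist s = r from
    ⟨fun s hs => (h s hs).1, fun s hs => (h s hs).2⟩
  intro s hs
  obtain ⟨a, hsa, ha, hsum⟩ := exists_haarSum_of_mem_SMDr (by omega) hs
  have hu : 2 ^ J * (r ^ 2 / D) ≤ 1 := by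
    rw [mul_div_assoc', div_le_one hDpos]
    rwa [le_div_iff₀ (by positivity), mul_comm] at hrM
  have hdev : ∀ x ∈ Icc (0 : ℝ) 1, |s x - 1| ≤ 1 := fun x hx => by
    rw [hsa hx, add_sub_cancel_left]
    refine abs_haarSum_le zero_le_one (fun i _ => ?_) x
    rcases ha i with h | h <;> rw [h] <;> linarith
  have hnonneg : ∀ x ∈ Icc (0 : ℝ) 1, 0 ≤ s x := fun x hx => by
    linarith [(abs_le.1 (hdev x hx)).1]
  refine ⟨⟨⟨mem_besovBody_of_eqOn hsa hnonneg ?_,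
    mem_weakBesovBody_of_eqOn hsa hnonneg hγ.le (by positivity) ha ?_⟩, fun x hx => ?_⟩, ?_⟩
  · rw [hsum, mul_comm 2 (J : ℝ), mul_assoc, ← mul_neg, Real.rpow_mul zero_le_two,
      Real.rpow_natCast]
    exact hrR
  · rw [hsum]
    exact le_mul_rpow_div (sq_nonneg r) hDpos hR'.le (by linarith) hrR'
  · linarith [abs_sub_abs_le_abs_sub (s x) (1 : ℝ), hdev x hx, abs_one (α := ℝ)]
  · rw [sepDist, distSqToConst_of_eqOn hsa, hsum, Real.sqrt_sq hr.le]

/-- The inclusion step in the proof of Theorem 1 of Fromont–Laurent–Reynaud-Bouret: with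
`φ = ψ = 1_{[0,1/2)} - 1_{[1/2,1)}`, `M = 2^J` and `ρ = 1`, if
`r² ≤ min(D/M, R² M^{-2δ}, R'^{2(1+2γ)} D^{-2γ})` then
`S_{M,D,r} ⊆ B^δ_{2,∞}(R) ∩ W_γ(R') ∩ L^∞(R'')` and every `s ∈ S_{M,D,r}` satisfies
`d(s, S₀) = r`. -/
theorem net_subset_besov_bodies (R R' R'' δ γ : ℝ) (hR : 0 < R) (hR' : 0 < R')
    (hR'' : 2 ≤ R'') (hδ : 0 < δ) (hγ : 0 < γ)
    (J : ℕ) (D : ℕ) (hD : 1 ≤ D) (hDM : D ≤ 2 ^ J) (r : ℝ) (hr : 0 < r)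
    (hr2 : r ^ 2 ≤ min ((D : ℝ) / 2 ^ J)
      (min (R ^ 2 * ((2 : ℝ) ^ J) ^ (-(2 * δ))) (R' ^ (2 * (1 + 2 * γ)) * (D : ℝ) ^ (-(2 * γ))))) :
    SMDr (2 ^ J) D 1 r haarPsi ⊆ besovBody δ R ∩ weakBesovBody γ R' ∩ linfBall R'' ∧
    ∀ s ∈ SMDr (2 ^ J) D 1 r haarPsi, sepDist s = r :=
  net_subset_besov_bodies_general R R' R'' δ γ hR' hR'' hγ J D hD r hr hr2
end
end
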